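/- arXiv:2403.18084 — 6 statements merged into one kernel-verified Lean document; each statement's English description precedes it below -/
import Mathlib

section
/- Let R_S > 0, L > 0, W > 0. Suppose φ : ℝ² → ℝ is twice continuously differentiable, L-periodic in x (φ(x+L,y) = φ(x,y)), satisfies ∂ₓₓφ + ∂_yyφ = R_S⁻² φ on the strip ℝ × [0,W], satisfies ∂ₓφ(x,0) = 0 = ∂ₓφ(x,W) for all x, and has vanishing wall circulations ∫₀ᴸ ∂_yφ(x,0) dx = 0 and ∫₀ᴸ ∂_yφ(x,W) dx = 0. Then φ = 0 everywhere on ℝ × [0,W]. (Consequently the elliptic inversion ∇²ψ̄ − R_S⁻²ψ̄ = given data, with the channel boundary conditions and prescribed wall circulations, has at most one solution.) -/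
/-! The flux `G(y) = ∫₀ᴸ φ φ_y dx` vanishes on both walls, because `φ` is constant along a wall
and the wall circulation is zero. By the equation and an integration by parts in `x` over a
period, `G'(y) = ∫₀ᴸ (φ_x² + φ_y² + R_S⁻² φ²) dx ≥ 0` on the channel. Hence this nonnegative
energy integrates to `G(W) - G(0) = 0` over `[0, W]`, so it vanishes identically, and so does `φ`. -/

open MeasureTheory Set Function

theorem eqOn_zero_of_nonneg_of_intervalIntegral_eq_zero {f : ℝ → ℝ} {a b : ℝ} (hab : a < b)
    (hf : ContinuousOn f (Icc a b)) (hf_nonneg : ∀ x ∈ Icc a b, 0 ≤ f x)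
    (hf_int : ∫ x in a..b, f x = 0) : EqOn f 0 (Icc a b) := by
  intro c hc
  by_contra hfc
  have hpos := intervalIntegral.integral_lt_integral_of_continuousOn_of_le_of_exists_lt hab
    continuousOn_const hf (fun x hx => hf_nonneg x (Ioc_subset_Icc_self hx))
    ⟨c, hc, (hf_nonneg c hc).lt_of_ne (Ne.symm hfc)⟩
  simp [hf_int] at hpos

theorem intervalIntegral.hasDerivAt_integral_of_continuous {E : Type*} [NormedAddCommGroup E]
    [NormedSpace ℝ E] {F F' : ℝ → ℝ → E} {a b y₀ : ℝ} (hF : ∀ y, Continuous (F y))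
    (hF' : Continuous F'.uncurry) (hderiv : ∀ y x, HasDerivAt (fun y => F y x) (F' y x) y) :
    HasDerivAt (fun y => ∫ x in a..b, F y x) (∫ x in a..b, F' y₀ x) y₀ := by
  obtain ⟨C, hC⟩ := ((isCompact_closedBall y₀ 1).prod isCompact_uIcc).exists_bound_of_continuousOn
    hF'.continuousOn
  exact (hasDerivAt_integral_of_dominated_loc_of_deriv_le (bound := fun _ => C)
    (Metric.closedBall_mem_nhds y₀ one_pos) (.of_forall fun y => (hF y).aestronglyMeasurable)
    ((hF y₀).intervalIntegrable a b)
    (hF'.comp (continuous_const.prodMk continuous_id)).aestronglyMeasurable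
    (ae_of_all _ fun x hx y hy => hC (y, x) ⟨hy, uIoc_subset_uIcc hx⟩) intervalIntegrable_const
    (ae_of_all _ fun x _ y _ => hderiv y x)).2

namespace Function.Periodic

variable {E : Type*} [NormedAddCommGroup E] [NormedSpace ℝ E]

protected theorem deriv {f : ℝ → E} {c : ℝ} (hf : Periodic f c) : Periodic (deriv f) c :=
  fun x => by rw [← deriv_comp_add_const, funext hf]

theorem intervalIntegral_eq_zero_of_hasDerivAt [CompleteSpace E] {f f' : ℝ → E} {c : ℝ}
    (hf : Periodic f c) (hderiv : ∀ x, HasDerivAt f (f' x) x) (a : ℝ)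
    (hint : IntervalIntegrable f' volume a (a + c)) : ∫ x in a..a + c, f' x = 0 := by
  rw [intervalIntegral.integral_eq_sub_of_hasDerivAt (fun x _ => hderiv x) hint, hf, sub_self]

end Function.Periodic

section PartialDerivatives

variable {E : Type*} [NormedAddCommGroup E] [NormedSpace ℝ E] {u : ℝ × ℝ → E}

/- Partial derivatives as derivatives of slices, so that iterated one-variable `deriv`s of a curried
function are definitionally `partialFst (partialFst u)` and `partialSnd (partialSnd u)`. -/
noncomputable def partialFst (u : ℝ × ℝ → E) (z : ℝ × ℝ) : E := deriv (fun t => u (t, z.2)) z.1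

noncomputable def partialSnd (u : ℝ × ℝ → E) (z : ℝ × ℝ) : E := deriv (fun t => u (z.1, t)) z.2

theorem DifferentiableAt.hasDerivAt_partialFst {x y : ℝ} (hu : DifferentiableAt ℝ u (x, y)) :
    HasDerivAt (fun t => u (t, y)) (partialFst u (x, y)) x :=
  (hu.hasFDerivAt.comp_hasDerivAt x ((hasDerivAt_id x).prodMk (hasDerivAt_const x y))
    ).differentiableAt.hasDerivAt

theorem DifferentiableAt.hasDerivAt_partialSnd {x y : ℝ} (hu : DifferentiableAt ℝ u (x, y)) :
    HasDerivAt (fun t => u (x, t)) (partialSnd u (x, y)) y :=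
  (hu.hasFDerivAt.comp_hasDerivAt y ((hasDerivAt_const y x).prodMk (hasDerivAt_id y))
    ).differentiableAt.hasDerivAt

theorem Differentiable.partialFst_eq_fderiv (hu : Differentiable ℝ u) :
    partialFst u = fun z => fderiv ℝ u z (1, 0) := by
  funext ⟨x, y⟩
  exact ((hu (x, y)).hasFDerivAt.comp_hasDerivAt x
    ((hasDerivAt_id x).prodMk (hasDerivAt_const x y))).deriv

theorem Differentiable.partialSnd_eq_fderiv (hu : Differentiable ℝ u) :
    partialSnd u = fun z => fderiv ℝ u z (0, 1) := by
  funext ⟨x, y⟩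
  exact ((hu (x, y)).hasFDerivAt.comp_hasDerivAt y
    ((hasDerivAt_const y x).prodMk (hasDerivAt_id y))).deriv

theorem ContDiff.partialFst {m n : WithTop ℕ∞} (hu : ContDiff ℝ n u) (hmn : m + 1 ≤ n) :
    ContDiff ℝ m (partialFst u) := by
  rw [(hu.differentiable (by rintro rfl; simp at hmn)).partialFst_eq_fderiv]
  exact (ContinuousLinearMap.apply ℝ E ((1, 0) : ℝ × ℝ)).contDiff.comp (hu.fderiv_right hmn)

theorem ContDiff.partialSnd {m n : WithTop ℕ∞} (hu : ContDiff ℝ n u) (hmn : m + 1 ≤ n) :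
    ContDiff ℝ m (partialSnd u) := by
  rw [(hu.differentiable (by rintro rfl; simp at hmn)).partialSnd_eq_fderiv]
  exact (ContinuousLinearMap.apply ℝ E ((0, 1) : ℝ × ℝ)).contDiff.comp (hu.fderiv_right hmn)

end PartialDerivatives

section Channel

variable {u : ℝ × ℝ → ℝ} {L : ℝ}

noncomputable def rowFlux (u : ℝ × ℝ → ℝ) (L y : ℝ) : ℝ :=
  ∫ x in 0..L, u (x, y) * partialSnd u (x, y)

theorem rowFlux_eq_zero_of_wall (hu : Differentiable ℝ u) {w : ℝ}
    (hwall : ∀ x, partialFst u (x, w) = 0) (hcirc : ∫ x in 0..L, partialSnd u (x, w) = 0) :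
    rowFlux u L w = 0 := by
  have hconst : ∀ x, u (x, w) = u (0, w) := fun x =>
    is_const_of_deriv_eq_zero (fun t => (hu (t, w)).hasDerivAt_partialFst.differentiableAt)
      hwall x 0
  simp only [rowFlux, hconst, intervalIntegral.integral_const_mul, hcirc, mul_zero]

noncomputable def rowEnergy (u : ℝ × ℝ → ℝ) (κ L y : ℝ) : ℝ :=
  ∫ x in 0..L, (partialFst u (x, y) ^ 2 + partialSnd u (x, y) ^ 2 + κ * u (x, y) ^ 2)

theorem rowEnergy_nonneg {κ : ℝ} (hκ : 0 ≤ κ) (hL : 0 ≤ L) (y : ℝ) : 0 ≤ rowEnergy u κ L y :=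
  intervalIntegral.integral_nonneg hL fun _ _ => by positivity

theorem continuous_rowEnergy (hu : ContDiff ℝ 1 u) (κ : ℝ) : Continuous (rowEnergy u κ L) := by
  have hu_cont := hu.continuous
  have hux_cont := (hu.partialFst (m := 0) le_rfl).continuous
  have huy_cont := (hu.partialSnd (m := 0) le_rfl).continuous
  exact intervalIntegral.continuous_parametric_intervalIntegral_of_continuous' (by fun_prop) _ _

theorem integral_sq_partialFst_add_mul_partialFst_partialFst (hu : ContDiff ℝ 2 u)
    (hper : ∀ x y, u (x + L, y) = u (x, y)) (y : ℝ) :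
    ∫ x in 0..L, (partialFst u (x, y) ^ 2 + u (x, y) * partialFst (partialFst u) (x, y)) = 0 := by
  have hux : ContDiff ℝ 1 (partialFst u) := hu.partialFst le_rfl
  have hu_cont := hu.continuous
  have hux_cont := hux.continuous
  have huxx_cont := (hux.partialFst (m := 0) le_rfl).continuous
  have hrow : Periodic (fun x => u (x, y)) L := fun x => hper x y
  have hderiv : ∀ x, HasDerivAt (fun x => u (x, y) * partialFst u (x, y))
      (partialFst u (x, y) ^ 2 + u (x, y) * partialFst (partialFst u) (x, y)) x := fun x =>
    ((hu.differentiable two_ne_zero (x, y)).hasDerivAt_partialFst.mul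
      (hux.differentiable one_ne_zero (x, y)).hasDerivAt_partialFst).congr_deriv (by ring)
  simpa using (hrow.mul hrow.deriv).intervalIntegral_eq_zero_of_hasDerivAt hderiv 0
    (Continuous.intervalIntegrable (by fun_prop) _ _)

/-- Differentiating under the integral gives `∫ (u_y² + u u_yy)`; the equation turns `u u_yy` into
`κ u² - u u_xx`, and `-∫ u u_xx = ∫ u_x²` over a period. -/
theorem hasDerivAt_rowFlux (hu : ContDiff ℝ 2 u) (hper : ∀ x y, u (x + L, y) = u (x, y))
    {κ y : ℝ} (hpde : ∀ x,
      partialFst (partialFst u) (x, y) + partialSnd (partialSnd u) (x, y) = κ * u (x, y)) :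
    HasDerivAt (rowFlux u L) (rowEnergy u κ L y) y := by
  have hux : ContDiff ℝ 1 (partialFst u) := hu.partialFst le_rfl
  have huy : ContDiff ℝ 1 (partialSnd u) := hu.partialSnd le_rfl
  have hu_cont := hu.continuous
  have hux_cont := hux.continuous
  have huy_cont := huy.continuous
  have huxx_cont := (hux.partialFst (m := 0) le_rfl).continuous
  have huyy_cont := (huy.partialSnd (m := 0) le_rfl).continuous
  have hderiv := intervalIntegral.hasDerivAt_integral_of_continuous (a := 0) (b := L) (y₀ := y)
    (F := fun y x => u (x, y) * partialSnd u (x, y))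
    (F' := fun y x => partialSnd u (x, y) ^ 2 + u (x, y) * partialSnd (partialSnd u) (x, y))
    (fun y => by fun_prop) (by fun_prop) fun y x =>
      ((hu.differentiable two_ne_zero (x, y)).hasDerivAt_partialSnd.mul
        (huy.differentiable one_ne_zero (x, y)).hasDerivAt_partialSnd).congr_deriv (by ring)
  refine hderiv.congr_deriv ?_
  calc ∫ x in 0..L, (partialSnd u (x, y) ^ 2 + u (x, y) * partialSnd (partialSnd u) (x, y))
      = ∫ x in 0..L,
          ((partialFst u (x, y) ^ 2 + partialSnd u (x, y) ^ 2 + κ * u (x, y) ^ 2)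
            - (partialFst u (x, y) ^ 2 + u (x, y) * partialFst (partialFst u) (x, y))) :=
        intervalIntegral.integral_congr fun x _ => by linear_combination u (x, y) * hpde x
    _ = rowEnergy u κ L y := by
        rw [intervalIntegral.integral_sub (Continuous.intervalIntegrable (by fun_prop) _ _)
          (Continuous.intervalIntegrable (by fun_prop) _ _),
          integral_sq_partialFst_add_mul_partialFst_partialFst hu hper y, sub_zero, rowEnergy]

theorem eq_zero_of_rowEnergy_eq_zero (hu : ContDiff ℝ 1 u) (hL : 0 < L) {κ : ℝ} (hκ : 0 < κ)
    (hper : ∀ x y, u (x + L, y) = u (x, y)) {y : ℝ} (henergy : rowEnergy u κ L y = 0) (x : ℝ) :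
    u (x, y) = 0 := by
  have hu_cont := hu.continuous
  have hux_cont := (hu.partialFst (m := 0) le_rfl).continuous
  have huy_cont := (hu.partialSnd (m := 0) le_rfl).continuous
  have hdensity := eqOn_zero_of_nonneg_of_intervalIntegral_eq_zero hL
    (Continuous.continuousOn (by fun_prop)) (fun x _ => by positivity) henergy
  have hrow_zero : ∀ x ∈ Icc 0 L, u (x, y) = 0 := fun x hx => by
    have h := hdensity hx
    simp only [Pi.zero_apply] at h
    have : κ * u (x, y) ^ 2 = 0 := by
      nlinarith [sq_nonneg (partialFst u (x, y)), sq_nonneg (partialSnd u (x, y)),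
        mul_nonneg hκ.le (sq_nonneg (u (x, y)))]
    simpa [hκ.ne'] using this
  have hrow : Periodic (fun x => u (x, y)) L := fun x => hper x y
  obtain ⟨x', hx', hxx'⟩ := hrow.exists_mem_Ico₀ hL x
  exact hxx' ▸ hrow_zero x' (Ico_subset_Icc_self hx')

theorem eqOn_zero_of_rowFlux_eq_zero (hu : ContDiff ℝ 2 u) (hL : 0 < L) {W κ : ℝ} (hW : 0 < W)
    (hκ : 0 < κ) (hper : ∀ x y, u (x + L, y) = u (x, y))
    (hpde : ∀ x, ∀ y ∈ Icc 0 W,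
      partialFst (partialFst u) (x, y) + partialSnd (partialSnd u) (x, y) = κ * u (x, y))
    (hflux₀ : rowFlux u L 0 = 0) (hflux_W : rowFlux u L W = 0) :
    ∀ x, ∀ y ∈ Icc 0 W, u (x, y) = 0 := by
  have hE_cont := continuous_rowEnergy (L := L) (hu.of_le one_le_two) κ
  have hE_int : ∫ y in 0..W, rowEnergy u κ L y = 0 := by
    rw [intervalIntegral.integral_eq_sub_of_hasDerivAt
      (fun y hy => hasDerivAt_rowFlux hu hper (hpde · y (uIcc_of_le hW.le ▸ hy)))
      (hE_cont.intervalIntegrable _ _), hflux_W, hflux₀, sub_zero]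
  have hE_zero := eqOn_zero_of_nonneg_of_intervalIntegral_eq_zero hW hE_cont.continuousOn
    (fun y _ => rowEnergy_nonneg hκ.le hL.le y) hE_int
  exact fun x y hy => eq_zero_of_rowEnergy_eq_zero (hu.of_le one_le_two) hL hκ hper (hE_zero hy) x

end Channel

/-- Uniqueness for the elliptic inversion in the zonal channel:
a `C²` function `φ`, `L`-periodic in `x`, satisfying `∇²φ = R_S⁻² φ` on the strip
`ℝ × [0,W]`, with `∂ₓφ = 0` on both walls and vanishing wall circulations,
must vanish identically on the strip. -/
theorem elliptic_inversion_uniqueness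
    (RS L W : ℝ) (hRS : 0 < RS) (hL : 0 < L) (hW : 0 < W)
    (φ : ℝ → ℝ → ℝ)
    (hsmooth : ContDiff ℝ 2 (fun z : ℝ × ℝ => φ z.1 z.2))
    (hper : ∀ x y : ℝ, φ (x + L) y = φ x y)
    (hpde : ∀ x : ℝ, ∀ y ∈ Set.Icc (0:ℝ) W,
      deriv (fun x' => deriv (fun x'' => φ x'' y) x') x
        + deriv (fun y' => deriv (fun y'' => φ x y'') y') y
        = (RS ^ 2)⁻¹ * φ x y)
    (hwall0 : ∀ x : ℝ, deriv (fun x' => φ x' 0) x = 0)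
    (hwallW : ∀ x : ℝ, deriv (fun x' => φ x' W) x = 0)
    (hcirc0 : (∫ x in (0:ℝ)..L, deriv (fun y' => φ x y') 0) = 0)
    (hcircW : (∫ x in (0:ℝ)..L, deriv (fun y' => φ x y') W) = 0) :
    ∀ x : ℝ, ∀ y ∈ Set.Icc (0:ℝ) W, φ x y = 0 := by
  have hdiff := hsmooth.differentiable two_ne_zero
  exact eqOn_zero_of_rowFlux_eq_zero hsmooth hL hW (by positivity) hper hpde
    (rowFlux_eq_zero_of_wall hdiff hwall0 hcirc0) (rowFlux_eq_zero_of_wall hdiff hwallW hcircW)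
end

section
/- Fix constants L > 0, W > 0, β ∈ ℝ, R_S > 0, amplitudes A ≠ 0, c₂, c₃ ∈ ℝ, a nonzero integer m and a positive integer n, and set k := 2πm/L, l := nπ/W. Define ψ̄(x,y,t) := A cos(kx − ωt) sin(ly), ψσ := c₂ (constant), ψσ² := c₃ (constant). Then the triple (ψ̄, ψσ, ψσ²) satisfies the IL^(0,1)QG equations together with the no-normal-flow boundary condition if and only if ω (k² + l² + R_S⁻²) = −kβ, i.e. ω = −kβ/(k² + l² + R_S⁻²) (the Rossby wave dispersion relation). -/
/-!
For the mode `ψ̄ = A cos(kx − ωt) sin(ly)` one has `∇²ψ̄ = −(k² + l²) ψ̄`, so with constant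
`ψσ`, `ψσ²` the potential vorticity is `ξ̄ = −K ψ̄ + β y + const`, where `K = k² + l² + R_S⁻²`.
Since `{ψ̄, ψ̄} = 0`, the first equation reduces to
`−K ∂ₜψ̄ + β ∂ₓψ̄ = −A (K ω + k β) sin(kx − ωt) sin(ly)`; the equations for the constant fields
hold trivially, and `l = nπ/W` makes `∂ₓψ̄` vanish on both walls. Evaluating at a point where
both sines equal `1` gives the dispersion relation.
-/

/-- Partial derivative in `x` of a field of `(x, y, t)`. -/
noncomputable def px (f : ℝ → ℝ → ℝ → ℝ) (x y t : ℝ) : ℝ := deriv (fun x' => f x' y t) x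

/-- Partial derivative in `y` of a field of `(x, y, t)`. -/
noncomputable def py (f : ℝ → ℝ → ℝ → ℝ) (x y t : ℝ) : ℝ := deriv (fun y' => f x y' t) y

/-- Partial derivative in `t` of a field of `(x, y, t)`. -/
noncomputable def pt (f : ℝ → ℝ → ℝ → ℝ) (x y t : ℝ) : ℝ := deriv (fun t' => f x y t') t

/-- Second partial derivative in `x`. -/
noncomputable def pxx (f : ℝ → ℝ → ℝ → ℝ) (x y t : ℝ) : ℝ := deriv (fun x' => px f x' y t) x

/-- Second partial derivative in `y`. -/
noncomputable def pyy (f : ℝ → ℝ → ℝ → ℝ) (x y t : ℝ) : ℝ := deriv (fun y' => py f x y' t) y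

/-- Jacobian bracket `{a,b} = ∂ₓa ∂_yb − ∂_ya ∂ₓb` of two fields of `(x, y, t)`. -/
noncomputable def jac (a b : ℝ → ℝ → ℝ → ℝ) (x y t : ℝ) : ℝ :=
  px a x y t * py b x y t - py a x y t * px b x y t

/-- Potential vorticity `ξ̄ = ∇²ψ̄ − R_S⁻²(ψ̄ − ψσ + (2/3)ψσ²) + βy`. -/
noncomputable def xibar (RS β : ℝ) (ψb ψσ ψσ2 : ℝ → ℝ → ℝ → ℝ) (x y t : ℝ) : ℝ :=
  pxx ψb x y t + pyy ψb x y t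
    - (RS ^ 2)⁻¹ * (ψb x y t - ψσ x y t + 2 / 3 * ψσ2 x y t) + β * y

/-- A field of `(x, y, t)` is smooth (infinitely differentiable as a function on `ℝ³`). -/
def Smooth3 (f : ℝ → ℝ → ℝ → ℝ) : Prop :=
  ContDiff ℝ (⊤ : ℕ∞) (fun z : ℝ × ℝ × ℝ => f z.1 z.2.1 z.2.2)

/-- `L`-periodicity in the zonal direction `x`. -/
def PeriodicX (L : ℝ) (f : ℝ → ℝ → ℝ → ℝ) : Prop :=
  ∀ x y t : ℝ, f (x + L) y t = f x y t

/-- The IL⁽⁰'¹⁾QG equations on the channel `ℝ × [0,W] × ℝ`: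
`∂ₜξ̄ + {ψ̄, ξ̄ − R_S⁻²(ψσ − (2/3)ψσ²)} = 0`, `∂ₜψσ + {ψ̄, ψσ} = 0`,
`∂ₜψσ² + {ψ̄, ψσ²} = 0`. -/
def IL01QG (RS β W : ℝ) (ψb ψσ ψσ2 : ℝ → ℝ → ℝ → ℝ) : Prop :=
  ∀ x t : ℝ, ∀ y ∈ Set.Icc (0:ℝ) W,
    pt (xibar RS β ψb ψσ ψσ2) x y t
      + jac ψb (fun x' y' t' => xibar RS β ψb ψσ ψσ2 x' y' t'
          - (RS ^ 2)⁻¹ * (ψσ x' y' t' - 2 / 3 * ψσ2 x' y' t')) x y t = 0 ∧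
    pt ψσ x y t + jac ψb ψσ x y t = 0 ∧
    pt ψσ2 x y t + jac ψb ψσ2 x y t = 0

/-- No-normal-flow boundary condition: `∂ₓψ̄ = 0` on both channel walls. -/
def NoNormalFlow (W : ℝ) (ψb : ℝ → ℝ → ℝ → ℝ) : Prop :=
  ∀ x t : ℝ, px ψb x 0 t = 0 ∧ px ψb x W t = 0

open Real Set

section Bracket

variable (f : ℝ → ℝ → ℝ → ℝ) (a x y t : ℝ)

theorem pt_smul_add_stationary (g : ℝ → ℝ → ℝ) :
    pt (fun x y t => a * f x y t + g x y) x y t = a * pt f x y t := by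
  simp only [pt]
  rw [deriv_add_const, deriv_const_mul_field']

theorem jac_smul_self_add_mul_y (β : ℝ) (hf : DifferentiableAt ℝ (fun y' => f x y' t) y) :
    jac f (fun x y t => a * f x y t + β * y) x y t = β * px f x y t := by
  have hpx : px (fun x y t => a * f x y t + β * y) x y t = a * px f x y t := by
    simp only [px]
    rw [deriv_add_const, deriv_const_mul_field']
  have hpy : py (fun x y t => a * f x y t + β * y) x y t = a * py f x y t + β := by
    have h := (hf.hasDerivAt.const_mul a).add ((hasDerivAt_id y).const_mul β)
    exact h.deriv.trans (by rw [mul_one]; rfl)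
  simp only [jac, hpx, hpy]
  ring

theorem pt_add_jac_const (c : ℝ) :
    pt (fun _ _ _ => c) x y t + jac f (fun _ _ _ => c) x y t = 0 := by
  simp [pt, jac, px, py]

end Bracket

noncomputable def rossbyMode (A k l ω : ℝ) : ℝ → ℝ → ℝ → ℝ :=
  fun x y t => A * cos (k * x - ω * t) * sin (l * y)

namespace rossbyMode

variable (A k l ω : ℝ)

theorem px_eq (x y t : ℝ) :
    px (rossbyMode A k l ω) x y t = -(A * k) * sin (k * x - ω * t) * sin (l * y) := by
  have h := ((((hasDerivAt_id x).const_mul k).sub_const (ω * t)).cos.const_mul A).mul_const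
    (sin (l * y))
  exact h.deriv.trans (by simp only [id, mul_one]; ring)

theorem py_eq (x y t : ℝ) :
    py (rossbyMode A k l ω) x y t = A * l * cos (k * x - ω * t) * cos (l * y) := by
  have h := (((hasDerivAt_id y).const_mul l).sin.const_mul (A * cos (k * x - ω * t)))
  exact h.deriv.trans (by simp only [id, mul_one]; ring)

theorem pt_eq (x y t : ℝ) :
    pt (rossbyMode A k l ω) x y t = A * ω * sin (k * x - ω * t) * sin (l * y) := by
  have h := ((((hasDerivAt_id t).const_mul ω).const_sub (k * x)).cos.const_mul A).mul_const
    (sin (l * y))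
  exact h.deriv.trans (by simp only [id, mul_one]; ring)

theorem pxx_eq (x y t : ℝ) :
    pxx (rossbyMode A k l ω) x y t = -k ^ 2 * rossbyMode A k l ω x y t := by
  simp only [pxx, px_eq]
  have h := ((((hasDerivAt_id x).const_mul k).sub_const (ω * t)).sin.const_mul
    (-(A * k))).mul_const (sin (l * y))
  exact h.deriv.trans (by simp only [rossbyMode, id, mul_one]; ring)

theorem pyy_eq (x y t : ℝ) :
    pyy (rossbyMode A k l ω) x y t = -l ^ 2 * rossbyMode A k l ω x y t := by
  simp only [pyy, py_eq]
  have h := (((hasDerivAt_id y).const_mul l).cos.const_mul (A * l * cos (k * x - ω * t)))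
  exact h.deriv.trans (by simp only [rossbyMode, id, mul_one]; ring)

theorem differentiableAt_snd (x y t : ℝ) :
    DifferentiableAt ℝ (fun y' => rossbyMode A k l ω x y' t) y := by
  unfold rossbyMode
  fun_prop

variable (RS β c2 c3 : ℝ)

theorem xibar_eq :
    xibar RS β (rossbyMode A k l ω) (fun _ _ _ => c2) (fun _ _ _ => c3)
      = fun x y t => -(k ^ 2 + l ^ 2 + (RS ^ 2)⁻¹) * rossbyMode A k l ω x y t
          + ((RS ^ 2)⁻¹ * (c2 - 2 / 3 * c3) + β * y) := by
  funext x y t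
  rw [xibar, pxx_eq, pyy_eq]
  ring

theorem pt_xibar_add_jac_eq (x y t : ℝ) :
    pt (xibar RS β (rossbyMode A k l ω) (fun _ _ _ => c2) (fun _ _ _ => c3)) x y t
      + jac (rossbyMode A k l ω) (fun x' y' t' =>
          xibar RS β (rossbyMode A k l ω) (fun _ _ _ => c2) (fun _ _ _ => c3) x' y' t'
            - (RS ^ 2)⁻¹ * (c2 - 2 / 3 * c3)) x y t
      = -(A * (ω * (k ^ 2 + l ^ 2 + (RS ^ 2)⁻¹) + k * β)) * sin (k * x - ω * t) * sin (l * y) := by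
  have hG : (fun x' y' t' =>
        xibar RS β (rossbyMode A k l ω) (fun _ _ _ => c2) (fun _ _ _ => c3) x' y' t'
          - (RS ^ 2)⁻¹ * (c2 - 2 / 3 * c3))
      = fun x y t => -(k ^ 2 + l ^ 2 + (RS ^ 2)⁻¹) * rossbyMode A k l ω x y t + β * y := by
    funext x y t
    rw [xibar_eq]
    ring
  rw [hG, xibar_eq, pt_smul_add_stationary,
    jac_smul_self_add_mul_y _ _ _ _ _ _ (differentiableAt_snd ..), pt_eq, px_eq]
  ring

theorem il01qg_iff (W : ℝ) :
    IL01QG RS β W (rossbyMode A k l ω) (fun _ _ _ => c2) (fun _ _ _ => c3) ↔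
      ∀ x t : ℝ, ∀ y ∈ Icc (0 : ℝ) W,
        A * (ω * (k ^ 2 + l ^ 2 + (RS ^ 2)⁻¹) + k * β) * sin (k * x - ω * t) * sin (l * y) = 0 := by
  simp only [IL01QG, pt_xibar_add_jac_eq, pt_add_jac_const, and_true, neg_mul,
    neg_eq_zero]

theorem noNormalFlow {W : ℝ} (hlW : sin (l * W) = 0) : NoNormalFlow W (rossbyMode A k l ω) :=
  fun x t => by simp [px_eq, hlW]

end rossbyMode

theorem rossby_dispersion_relation_general
    (L W β RS A c2 c3 ω k l : ℝ)
    (hL : 0 < L) (hW : 0 < W) (hA : A ≠ 0)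
    (m : ℤ) (hm : m ≠ 0) (n : ℕ) (hn : 0 < n)
    (hk : k = 2 * Real.pi * (m : ℝ) / L) (hl : l = (n : ℝ) * Real.pi / W)
    (ψb ψσ ψσ2 : ℝ → ℝ → ℝ → ℝ)
    (hψb : ψb = fun x y t => A * Real.cos (k * x - ω * t) * Real.sin (l * y))
    (hψσ : ψσ = fun _ _ _ => c2)
    (hψσ2 : ψσ2 = fun _ _ _ => c3) :
    (IL01QG RS β W ψb ψσ ψσ2 ∧ NoNormalFlow W ψb) ↔
      ω * (k ^ 2 + l ^ 2 + (RS ^ 2)⁻¹) = -(k * β) := by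
  have hk0 : k ≠ 0 := by
    rw [hk]
    have : (m : ℝ) ≠ 0 := Int.cast_ne_zero.mpr hm
    positivity
  have hlW : l * W = n * π := by rw [hl, div_mul_cancel₀ _ hW.ne']
  have hψb' : ψb = rossbyMode A k l ω := hψb
  rw [hψb', hψσ, hψσ2, rossbyMode.il01qg_iff, and_iff_left (rossbyMode.noNormalFlow _ _ _ _
    (by rw [hlW, sin_nat_mul_pi]))]
  constructor
  · intro h
    have hy : W / (2 * n) ∈ Icc (0 : ℝ) W :=
      ⟨by positivity, div_le_self hW.le (by norm_cast; omega)⟩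
    have hx : k * (π / (2 * k)) - ω * 0 = π / 2 := by field_simp; ring
    have hly : l * (W / (2 * n)) = π / 2 := by rw [hl]; field_simp
    have h₀ := h (π / (2 * k)) 0 _ hy
    rw [hx, hly, sin_pi_div_two, mul_one, mul_one, mul_eq_zero] at h₀
    exact eq_neg_of_add_eq_zero_left (h₀.resolve_left hA)
  · intro h x t y _
    rw [add_eq_zero_iff_eq_neg.mpr h]
    ring

/-- Rossby-wave dispersion relation: the normal mode
`ψ̄ = A cos(kx − ωt) sin(ly)`, with constant `ψσ = c₂`, `ψσ² = c₃`,
`k = 2πm/L`, `l = nπ/W`, solves the IL⁽⁰'¹⁾QG equations together with the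
no-normal-flow boundary condition iff `ω (k² + l² + R_S⁻²) = −kβ`. -/
theorem rossby_dispersion_relation
    (L W β RS A c2 c3 ω k l : ℝ)
    (hL : 0 < L) (hW : 0 < W) (hRS : 0 < RS) (hA : A ≠ 0)
    (m : ℤ) (hm : m ≠ 0) (n : ℕ) (hn : 0 < n)
    (hk : k = 2 * Real.pi * (m : ℝ) / L) (hl : l = (n : ℝ) * Real.pi / W)
    (ψb ψσ ψσ2 : ℝ → ℝ → ℝ → ℝ)
    (hψb : ψb = fun x y t => A * Real.cos (k * x - ω * t) * Real.sin (l * y))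
    (hψσ : ψσ = fun _ _ _ => c2)
    (hψσ2 : ψσ2 = fun _ _ _ => c3) :
    (IL01QG RS β W ψb ψσ ψσ2 ∧ NoNormalFlow W ψb) ↔
      ω * (k ^ 2 + l ^ 2 + (RS ^ 2)⁻¹) = -(k * β) :=
  rossby_dispersion_relation_general L W β RS A c2 c3 ω k l hL hW hA m hm n hn hk hl ψb ψσ ψσ2 hψb
    hψσ hψσ2
end

section
/- Suppose (ψ̄, ψσ, ψσ²) is a smooth solution of the IL^(0,1)QG equations on ℝ × [0,W] × ℝ, with all three fields L-periodic in x and the no-normal-flow boundary condition satisfied. Then for every constant a ∈ ℝ and every continuously differentiable F : ℝ² → ℝ, the Casimir functional t ↦ ∫₀ᵂ ∫₀ᴸ [ a ξ̄(x,y,t) + F(ψσ(x,y,t), ψσ²(x,y,t)) ] dx dy is constant in time. -/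
/-!
Put `ρ = a ξ̄ + F(ψσ, ψσ²)` and `H = a q̄ + F(ψσ, ψσ²)`, where `q̄ = ξ̄ − R_S⁻²(ψσ − (2/3)ψσ²)` is
the field advected in the first equation. Since `{ψ̄, ·}` is a derivation, the three equations
combine to `∂ₜρ = −{ψ̄, H}`, and by symmetry of mixed partials
`{ψ̄, H} = ∂_y(H ∂ₓψ̄) − ∂ₓ(H ∂_yψ̄)`. Over one period in `x` the `∂ₓ` term integrates to zero;
over `[0, W]` the `∂_y` term integrates to the wall values of `H ∂ₓψ̄`, which vanish by the
no-normal-flow condition. So `∫∫ ρ` has zero time derivative.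
-/

open scoped ContDiff

-- An `abbrev`, so that `fun_prop` sees through it.
abbrev uncurry3 (f : ℝ → ℝ → ℝ → ℝ) : ℝ × ℝ × ℝ → ℝ := fun z => f z.1 z.2.1 z.2.2

section Slices

variable {E : Type*} [NormedAddCommGroup E] [NormedSpace ℝ E]
  {g : ℝ × ℝ × ℝ → E} {g' : ℝ × ℝ × ℝ →L[ℝ] E} {x y t : ℝ}

theorem HasFDerivAt.hasDerivAt_slice_x (hg : HasFDerivAt g g' (x, y, t)) :
    HasDerivAt (fun x' => g (x', y, t)) (g' (1, 0, 0)) x :=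
  hg.comp_hasDerivAt x <|
    (hasDerivAt_id x).prodMk ((hasDerivAt_const x y).prodMk (hasDerivAt_const x t))

theorem HasFDerivAt.hasDerivAt_slice_y (hg : HasFDerivAt g g' (x, y, t)) :
    HasDerivAt (fun y' => g (x, y', t)) (g' (0, 1, 0)) y :=
  hg.comp_hasDerivAt y <|
    (hasDerivAt_const y x).prodMk ((hasDerivAt_id y).prodMk (hasDerivAt_const y t))

theorem HasFDerivAt.hasDerivAt_slice_t (hg : HasFDerivAt g g' (x, y, t)) :
    HasDerivAt (fun t' => g (x, y, t')) (g' (0, 0, 1)) t :=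
  hg.comp_hasDerivAt t <|
    (hasDerivAt_const t x).prodMk ((hasDerivAt_const t y).prodMk (hasDerivAt_id t))

end Slices

section PartialDerivatives

variable {f : ℝ → ℝ → ℝ → ℝ} {x y t : ℝ} {m n : WithTop ℕ∞}

theorem px_eq_fderiv (hf : DifferentiableAt ℝ (uncurry3 f) (x, y, t)) :
    px f x y t = fderiv ℝ (uncurry3 f) (x, y, t) (1, 0, 0) :=
  hf.hasFDerivAt.hasDerivAt_slice_x.deriv

theorem py_eq_fderiv (hf : DifferentiableAt ℝ (uncurry3 f) (x, y, t)) :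
    py f x y t = fderiv ℝ (uncurry3 f) (x, y, t) (0, 1, 0) :=
  hf.hasFDerivAt.hasDerivAt_slice_y.deriv

theorem pt_eq_fderiv (hf : DifferentiableAt ℝ (uncurry3 f) (x, y, t)) :
    pt f x y t = fderiv ℝ (uncurry3 f) (x, y, t) (0, 0, 1) :=
  hf.hasFDerivAt.hasDerivAt_slice_t.deriv

theorem hasDerivAt_px (hf : DifferentiableAt ℝ (uncurry3 f) (x, y, t)) :
    HasDerivAt (fun x' => f x' y t) (px f x y t) x :=
  hf.hasFDerivAt.hasDerivAt_slice_x.differentiableAt.hasDerivAt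

theorem hasDerivAt_py (hf : DifferentiableAt ℝ (uncurry3 f) (x, y, t)) :
    HasDerivAt (fun y' => f x y' t) (py f x y t) y :=
  hf.hasFDerivAt.hasDerivAt_slice_y.differentiableAt.hasDerivAt

theorem hasDerivAt_pt (hf : DifferentiableAt ℝ (uncurry3 f) (x, y, t)) :
    HasDerivAt (fun t' => f x y t') (pt f x y t) t :=
  hf.hasFDerivAt.hasDerivAt_slice_t.differentiableAt.hasDerivAt

theorem uncurry3_px (hf : Differentiable ℝ (uncurry3 f)) :
    uncurry3 (px f) = fun z => fderiv ℝ (uncurry3 f) z (1, 0, 0) :=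
  funext fun z => px_eq_fderiv (hf z)

theorem uncurry3_py (hf : Differentiable ℝ (uncurry3 f)) :
    uncurry3 (py f) = fun z => fderiv ℝ (uncurry3 f) z (0, 1, 0) :=
  funext fun z => py_eq_fderiv (hf z)

theorem uncurry3_pt (hf : Differentiable ℝ (uncurry3 f)) :
    uncurry3 (pt f) = fun z => fderiv ℝ (uncurry3 f) z (0, 0, 1) :=
  funext fun z => pt_eq_fderiv (hf z)

theorem differentiable_of_add_one_le (hf : ContDiff ℝ n (uncurry3 f)) (hmn : m + 1 ≤ n) :
    Differentiable ℝ (uncurry3 f) :=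
  hf.differentiable (ne_bot_of_le_ne_bot (by simp) hmn)

theorem contDiff_px (hf : ContDiff ℝ n (uncurry3 f)) (hmn : m + 1 ≤ n) :
    ContDiff ℝ m (uncurry3 (px f)) := by
  rw [uncurry3_px (differentiable_of_add_one_le hf hmn)]
  exact (hf.fderiv_right hmn).clm_apply contDiff_const

theorem contDiff_py (hf : ContDiff ℝ n (uncurry3 f)) (hmn : m + 1 ≤ n) :
    ContDiff ℝ m (uncurry3 (py f)) := by
  rw [uncurry3_py (differentiable_of_add_one_le hf hmn)]
  exact (hf.fderiv_right hmn).clm_apply contDiff_const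

theorem contDiff_pt (hf : ContDiff ℝ n (uncurry3 f)) (hmn : m + 1 ≤ n) :
    ContDiff ℝ m (uncurry3 (pt f)) := by
  rw [uncurry3_pt (differentiable_of_add_one_le hf hmn)]
  exact (hf.fderiv_right hmn).clm_apply contDiff_const

theorem py_px_eq_px_py (hf : ContDiff ℝ 2 (uncurry3 f)) (x y t : ℝ) :
    py (px f) x y t = px (py f) x y t := by
  have hmn : (1 : WithTop ℕ∞) + 1 ≤ 2 := by norm_num
  have hd := differentiable_of_add_one_le hf hmn
  set D := fderiv ℝ (uncurry3 f)
  have hD : Differentiable ℝ D := (hf.fderiv_right hmn).differentiable_one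
  have hD_apply : ∀ v w, fderiv ℝ (fun z => D z v) (x, y, t) w = fderiv ℝ D (x, y, t) w v :=
    fun v w => by simp [fderiv_clm_apply (hD _) (differentiableAt_const v)]
  calc py (px f) x y t = fderiv ℝ D (x, y, t) (0, 1, 0) (1, 0, 0) := by
        rw [py_eq_fderiv ((contDiff_px hf hmn).differentiable_one _), uncurry3_px hd,
          hD_apply]
    _ = fderiv ℝ D (x, y, t) (1, 0, 0) (0, 1, 0) :=
        ((hf.contDiffAt).isSymmSndFDerivAt (by simp)) _ _
    _ = px (py f) x y t := by
        rw [px_eq_fderiv ((contDiff_py hf hmn).differentiable_one _), uncurry3_py hd,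
          hD_apply]

end PartialDerivatives

section Periodicity

variable {L : ℝ} {f g : ℝ → ℝ → ℝ → ℝ}

theorem periodicX_px (hf : PeriodicX L f) : PeriodicX L (px f) := fun x y t => by
  rw [px, px, ← deriv_comp_add_const]
  exact congrArg (deriv · x) (funext fun x' => hf x' y t)

theorem periodicX_py (hf : PeriodicX L f) : PeriodicX L (py f) := fun x y t =>
  congrArg (deriv · y) (funext fun y' => hf x y' t)

theorem periodicX_mul (hf : PeriodicX L f) (hg : PeriodicX L g) :
    PeriodicX L (fun x y t => f x y t * g x y t) := fun x y t =>
  congrArg₂ (· * ·) (hf x y t) (hg x y t)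

end Periodicity

section Smoothness

variable {f : ℝ → ℝ → ℝ → ℝ}

theorem Smooth3.contDiff (hf : Smooth3 f) (n : ℕ) : ContDiff ℝ n (uncurry3 f) :=
  hf.of_le (mod_cast le_top)

theorem smooth3_px (hf : Smooth3 f) : Smooth3 (px f) := contDiff_px hf (by simp)

theorem smooth3_py (hf : Smooth3 f) : Smooth3 (py f) := contDiff_py hf (by simp)

end Smoothness

theorem HasDerivAt.const_mul_add_comp {a s : ℝ} {g u v : ℝ → ℝ} {F : ℝ × ℝ → ℝ}
    {g' u' v' : ℝ} (hg : HasDerivAt g g' s) (hu : HasDerivAt u u' s) (hv : HasDerivAt v v' s)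
    (hF : DifferentiableAt ℝ F (u s, v s)) :
    HasDerivAt (fun s => a * g s + F (u s, v s)) (a * g' + fderiv ℝ F (u s, v s) (u', v')) s :=
  (hg.const_mul a).add (hF.hasFDerivAt.comp_hasDerivAt s (hu.prodMk hv))

-- With `g = xibar …` this is the density `ρ`, with `g = qbar …` the field `H`.
noncomputable def casimirIntegrand (a : ℝ) (F : ℝ × ℝ → ℝ) (g u v : ℝ → ℝ → ℝ → ℝ) :
    ℝ → ℝ → ℝ → ℝ :=
  fun x y t => a * g x y t + F (u x y t, v x y t)

section Jacobian

variable {a : ℝ} {F : ℝ × ℝ → ℝ} {ψ g u v H : ℝ → ℝ → ℝ → ℝ} {x y t : ℝ}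

theorem contDiff_casimirIntegrand {n : WithTop ℕ∞} (hg : ContDiff ℝ n (uncurry3 g))
    (hu : ContDiff ℝ n (uncurry3 u)) (hv : ContDiff ℝ n (uncurry3 v)) (hF : ContDiff ℝ n F) :
    ContDiff ℝ n (uncurry3 (casimirIntegrand a F g u v)) :=
  (contDiff_const.mul hg).add (hF.comp (hu.prodMk hv))

theorem periodicX_casimirIntegrand {L : ℝ} (hg : PeriodicX L g) (hu : PeriodicX L u)
    (hv : PeriodicX L v) : PeriodicX L (casimirIntegrand a F g u v) := fun x y t => by
  simp only [casimirIntegrand, hg x y t, hu x y t, hv x y t]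

theorem px_casimirIntegrand (hg : DifferentiableAt ℝ (uncurry3 g) (x, y, t))
    (hu : DifferentiableAt ℝ (uncurry3 u) (x, y, t))
    (hv : DifferentiableAt ℝ (uncurry3 v) (x, y, t)) (hF : Differentiable ℝ F) :
    px (casimirIntegrand a F g u v) x y t
      = a * px g x y t + fderiv ℝ F (u x y t, v x y t) (px u x y t, px v x y t) :=
  ((hasDerivAt_px hg).const_mul_add_comp (hasDerivAt_px hu) (hasDerivAt_px hv) (hF _)).deriv

theorem py_casimirIntegrand (hg : DifferentiableAt ℝ (uncurry3 g) (x, y, t))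
    (hu : DifferentiableAt ℝ (uncurry3 u) (x, y, t))
    (hv : DifferentiableAt ℝ (uncurry3 v) (x, y, t)) (hF : Differentiable ℝ F) :
    py (casimirIntegrand a F g u v) x y t
      = a * py g x y t + fderiv ℝ F (u x y t, v x y t) (py u x y t, py v x y t) :=
  ((hasDerivAt_py hg).const_mul_add_comp (hasDerivAt_py hu) (hasDerivAt_py hv) (hF _)).deriv

theorem pt_casimirIntegrand (hg : DifferentiableAt ℝ (uncurry3 g) (x, y, t))
    (hu : DifferentiableAt ℝ (uncurry3 u) (x, y, t))
    (hv : DifferentiableAt ℝ (uncurry3 v) (x, y, t)) (hF : Differentiable ℝ F) :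
    pt (casimirIntegrand a F g u v) x y t
      = a * pt g x y t + fderiv ℝ F (u x y t, v x y t) (pt u x y t, pt v x y t) :=
  ((hasDerivAt_pt hg).const_mul_add_comp (hasDerivAt_pt hu) (hasDerivAt_pt hv) (hF _)).deriv

theorem jac_casimirIntegrand (hg : DifferentiableAt ℝ (uncurry3 g) (x, y, t))
    (hu : DifferentiableAt ℝ (uncurry3 u) (x, y, t))
    (hv : DifferentiableAt ℝ (uncurry3 v) (x, y, t)) (hF : Differentiable ℝ F) :
    jac ψ (casimirIntegrand a F g u v) x y t
      = a * jac ψ g x y t + fderiv ℝ F (u x y t, v x y t) (jac ψ u x y t, jac ψ v x y t) := by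
  have hpair : (jac ψ u x y t, jac ψ v x y t)
      = px ψ x y t • (py u x y t, py v x y t) - py ψ x y t • (px u x y t, px v x y t) := by
    ext <;> simp [jac]
  rw [jac, px_casimirIntegrand hg hu hv hF, py_casimirIntegrand hg hu hv hF, hpair, map_sub,
    map_smul, map_smul, smul_eq_mul, smul_eq_mul, jac]
  ring

theorem jac_eq_py_sub_px (hψ : ContDiff ℝ 2 (uncurry3 ψ))
    (hH : DifferentiableAt ℝ (uncurry3 H) (x, y, t)) :
    jac ψ H x y t = py (fun x y t => H x y t * px ψ x y t) x y t
      - px (fun x y t => H x y t * py ψ x y t) x y t := by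
  have h12 : (1 : WithTop ℕ∞) + 1 ≤ 2 := by norm_num
  have hpxψ := (contDiff_px hψ h12).differentiable_one (x, y, t)
  have hpyψ := (contDiff_py hψ h12).differentiable_one (x, y, t)
  have hy : py (fun x y t => H x y t * px ψ x y t) x y t
      = py H x y t * px ψ x y t + H x y t * py (px ψ) x y t :=
    ((hasDerivAt_py hH).mul (hasDerivAt_py hpxψ)).deriv
  have hx : px (fun x y t => H x y t * py ψ x y t) x y t
      = px H x y t * py ψ x y t + H x y t * px (py ψ) x y t :=
    ((hasDerivAt_px hH).mul (hasDerivAt_px hpyψ)).deriv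
  rw [hy, hx, py_px_eq_px_py hψ, jac]
  ring

end Jacobian

section Integrals

variable {E : Type*} [NormedAddCommGroup E] [NormedSpace ℝ E]

theorem hasDerivAt_intervalIntegral_of_continuous {g g' : ℝ → ℝ → E}
    (hg : ∀ s, Continuous (g s)) (hg' : Continuous (Function.uncurry g'))
    (hd : ∀ s x, HasDerivAt (g · x) (g' s x) s) (a b s₀ : ℝ) :
    HasDerivAt (fun s => ∫ x in a..b, g s x) (∫ x in a..b, g' s₀ x) s₀ := by
  obtain ⟨C, hC⟩ := ((isCompact_closedBall s₀ 1).prod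
    (isCompact_uIcc (a := a) (b := b))).exists_bound_of_continuousOn hg'.continuousOn
  refine (intervalIntegral.hasDerivAt_integral_of_dominated_loc_of_deriv_le
    (bound := fun _ => C) (Metric.ball_mem_nhds s₀ zero_lt_one)
    (.of_forall fun s => (hg s).aestronglyMeasurable) ((hg s₀).intervalIntegrable a b)
    (hg'.comp (Continuous.prodMk_right s₀)).aestronglyMeasurable ?_ intervalIntegrable_const
    (.of_forall fun x _ s _ => hd s x)).2
  exact .of_forall fun x hx s hs =>
    hC (s, x) ⟨Metric.ball_subset_closedBall hs, Set.uIoc_subset_uIcc hx⟩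

variable {ρ A B : ℝ → ℝ → ℝ → ℝ}

theorem hasDerivAt_integral_integral_pt (hρ : ContDiff ℝ 1 (uncurry3 ρ)) (a b c d t₀ : ℝ) :
    HasDerivAt (fun t => ∫ y in c..d, ∫ x in a..b, ρ x y t)
      (∫ y in c..d, ∫ x in a..b, pt ρ x y t₀) t₀ := by
  have hρc : Continuous (uncurry3 ρ) := hρ.continuous
  have hptc : Continuous (uncurry3 (pt ρ)) := (contDiff_pt hρ (zero_add 1).le).continuous
  refine hasDerivAt_intervalIntegral_of_continuous (g := fun t y => ∫ x in a..b, ρ x y t)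
    (g' := fun t y => ∫ x in a..b, pt ρ x y t) (fun t => by fun_prop) (by fun_prop)
    (fun t y => ?_) c d t₀
  exact hasDerivAt_intervalIntegral_of_continuous (fun s => by fun_prop) (by fun_prop)
    (fun s x => hasDerivAt_pt (hρ.differentiable_one _)) a b t

theorem integral_integral_px_sub_py_eq_zero {L c d t : ℝ} (hA : ContDiff ℝ 1 (uncurry3 A))
    (hB : ContDiff ℝ 1 (uncurry3 B)) (hAper : PeriodicX L A) (hBc : ∀ x, B x c t = 0)
    (hBd : ∀ x, B x d t = 0) :
    ∫ y in c..d, ∫ x in 0..L, (px A x y t - py B x y t) = 0 := by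
  have hBcont : Continuous (uncurry3 B) := hB.continuous
  have hpxA : Continuous (uncurry3 (px A)) := (contDiff_px hA (zero_add 1).le).continuous
  have hpyB : Continuous (uncurry3 (py B)) := (contDiff_py hB (zero_add 1).le).continuous
  have hinner : ∀ y, ∫ x in 0..L, (px A x y t - py B x y t) = -∫ x in 0..L, py B x y t := by
    intro y
    have hper : A L y t = A 0 y t := by simpa using hAper 0 y t
    rw [intervalIntegral.integral_sub
      (Continuous.intervalIntegrable (by fun_prop) _ _)
      (Continuous.intervalIntegrable (by fun_prop) _ _),
      intervalIntegral.integral_eq_sub_of_hasDerivAt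
        (fun x _ => hasDerivAt_px (hA.differentiable_one (x, y, t)))
        (Continuous.intervalIntegrable (by fun_prop) _ _),
      hper, sub_self, zero_sub]
  have hB' : ∀ y, HasDerivAt (fun y => ∫ x in 0..L, B x y t) (∫ x in 0..L, py B x y t) y :=
    hasDerivAt_intervalIntegral_of_continuous (g' := fun y x => py B x y t)
      (fun y => by fun_prop) (by fun_prop)
      (fun y x => hasDerivAt_py (hB.differentiable_one _)) 0 L
  simp_rw [hinner, intervalIntegral.integral_neg,
    intervalIntegral.integral_eq_sub_of_hasDerivAt (fun y _ => hB' y)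
      (Continuous.intervalIntegrable (by fun_prop) _ _), hBc, hBd]
  simp

end Integrals

noncomputable def qbar (RS β : ℝ) (ψb ψσ ψσ2 : ℝ → ℝ → ℝ → ℝ) : ℝ → ℝ → ℝ → ℝ :=
  fun x y t => xibar RS β ψb ψσ ψσ2 x y t - (RS ^ 2)⁻¹ * (ψσ x y t - 2 / 3 * ψσ2 x y t)

section Equations

variable {L W RS β a : ℝ} {ψb ψσ ψσ2 : ℝ → ℝ → ℝ → ℝ} {F : ℝ × ℝ → ℝ}

theorem smooth3_xibar (hψb : Smooth3 ψb) (hψσ : Smooth3 ψσ) (hψσ2 : Smooth3 ψσ2) :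
    Smooth3 (xibar RS β ψb ψσ ψσ2) := by
  have hxx : ContDiff ℝ ∞ (uncurry3 (px (px ψb))) := smooth3_px (smooth3_px hψb)
  have hyy : ContDiff ℝ ∞ (uncurry3 (py (py ψb))) := smooth3_py (smooth3_py hψb)
  have hb : ContDiff ℝ ∞ (uncurry3 ψb) := hψb
  have hσ : ContDiff ℝ ∞ (uncurry3 ψσ) := hψσ
  have hσ2 : ContDiff ℝ ∞ (uncurry3 ψσ2) := hψσ2
  show ContDiff ℝ ∞ fun z => uncurry3 (px (px ψb)) z + uncurry3 (py (py ψb)) z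
      - (RS ^ 2)⁻¹ * (uncurry3 ψb z - uncurry3 ψσ z + 2 / 3 * uncurry3 ψσ2 z) + β * z.2.1
  fun_prop

theorem smooth3_qbar (hψb : Smooth3 ψb) (hψσ : Smooth3 ψσ) (hψσ2 : Smooth3 ψσ2) :
    Smooth3 (qbar RS β ψb ψσ ψσ2) := by
  have hξ : ContDiff ℝ ∞ (uncurry3 (xibar RS β ψb ψσ ψσ2)) := smooth3_xibar hψb hψσ hψσ2
  have hσ : ContDiff ℝ ∞ (uncurry3 ψσ) := hψσ
  have hσ2 : ContDiff ℝ ∞ (uncurry3 ψσ2) := hψσ2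
  show ContDiff ℝ ∞ (uncurry3 (qbar RS β ψb ψσ ψσ2))
  unfold qbar
  fun_prop

theorem periodicX_xibar (hb : PeriodicX L ψb) (hσ : PeriodicX L ψσ) (hσ2 : PeriodicX L ψσ2) :
    PeriodicX L (xibar RS β ψb ψσ ψσ2) := fun x y t => by
  have hxx : pxx ψb (x + L) y t = pxx ψb x y t := periodicX_px (periodicX_px hb) x y t
  have hyy : pyy ψb (x + L) y t = pyy ψb x y t := periodicX_py (periodicX_py hb) x y t
  simp only [xibar, hxx, hyy, hb x y t, hσ x y t, hσ2 x y t]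

theorem periodicX_qbar (hb : PeriodicX L ψb) (hσ : PeriodicX L ψσ) (hσ2 : PeriodicX L ψσ2) :
    PeriodicX L (qbar RS β ψb ψσ ψσ2) := fun x y t => by
  simp only [qbar, periodicX_xibar hb hσ hσ2 x y t, hσ x y t, hσ2 x y t]

theorem pt_casimirIntegrand_eq_neg_jac (heqs : IL01QG RS β W ψb ψσ ψσ2) (hψb : Smooth3 ψb)
    (hψσ : Smooth3 ψσ) (hψσ2 : Smooth3 ψσ2) (hF : Differentiable ℝ F) (x t : ℝ) {y : ℝ}
    (hy : y ∈ Set.Icc 0 W) :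
    pt (casimirIntegrand a F (xibar RS β ψb ψσ ψσ2) ψσ ψσ2) x y t
      = -jac ψb (casimirIntegrand a F (qbar RS β ψb ψσ ψσ2) ψσ ψσ2) x y t := by
  obtain ⟨hξ, hσ, hσ2⟩ := heqs x t y hy
  have hξ' : pt (xibar RS β ψb ψσ ψσ2) x y t = -jac ψb (qbar RS β ψb ψσ ψσ2) x y t :=
    eq_neg_of_add_eq_zero_left hξ
  have hd : ∀ {f}, Smooth3 f → DifferentiableAt ℝ (uncurry3 f) (x, y, t) :=
    fun hf => (hf.contDiff 1).differentiable_one _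
  rw [pt_casimirIntegrand (hd (smooth3_xibar hψb hψσ hψσ2)) (hd hψσ) (hd hψσ2) hF,
    jac_casimirIntegrand (hd (smooth3_qbar hψb hψσ hψσ2)) (hd hψσ) (hd hψσ2) hF,
    hξ', eq_neg_of_add_eq_zero_left hσ, eq_neg_of_add_eq_zero_left hσ2,
    ← Prod.neg_mk, map_neg]
  ring

theorem integral_integral_pt_casimirIntegrand_eq_zero (heqs : IL01QG RS β W ψb ψσ ψσ2)
    (hbc : NoNormalFlow W ψb) (hW : 0 ≤ W) (hψb : Smooth3 ψb) (hψσ : Smooth3 ψσ)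
    (hψσ2 : Smooth3 ψσ2) (hperb : PeriodicX L ψb) (hperσ : PeriodicX L ψσ)
    (hperσ2 : PeriodicX L ψσ2) (hF : ContDiff ℝ 1 F) (t : ℝ) :
    ∫ y in 0..W, ∫ x in 0..L, pt (casimirIntegrand a F (xibar RS β ψb ψσ ψσ2) ψσ ψσ2) x y t
      = 0 := by
  set H := casimirIntegrand a F (qbar RS β ψb ψσ ψσ2) ψσ ψσ2
  have hH : ContDiff ℝ 1 (uncurry3 H) := contDiff_casimirIntegrand
    ((smooth3_qbar hψb hψσ hψσ2).contDiff 1) (hψσ.contDiff 1) (hψσ2.contDiff 1) hF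
  have hHper : PeriodicX L H :=
    periodicX_casimirIntegrand (periodicX_qbar hperb hperσ hperσ2) hperσ hperσ2
  refine (intervalIntegral.integral_congr fun y hy => intervalIntegral.integral_congr
    fun x _ => ?_).trans <| integral_integral_px_sub_py_eq_zero
      (A := fun x y t => H x y t * py ψb x y t) (B := fun x y t => H x y t * px ψb x y t)
      (hH.mul ((smooth3_py hψb).contDiff 1)) (hH.mul ((smooth3_px hψb).contDiff 1))
      (periodicX_mul hHper (periodicX_py hperb))
      (fun x => mul_eq_zero_of_right _ (hbc x t).1) (fun x => mul_eq_zero_of_right _ (hbc x t).2)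
  rw [Set.uIcc_of_le hW] at hy
  beta_reduce
  rw [pt_casimirIntegrand_eq_neg_jac heqs hψb hψσ hψσ2 hF.differentiable_one x t hy,
    jac_eq_py_sub_px (hψb.contDiff 2) (hH.differentiable_one _)]
  ring

end Equations

theorem casimir_conserved_general
    (L W β RS : ℝ) (hW : 0 < W)
    (ψb ψσ ψσ2 : ℝ → ℝ → ℝ → ℝ)
    (hψb : Smooth3 ψb) (hψσ : Smooth3 ψσ) (hψσ2 : Smooth3 ψσ2)
    (hperb : PeriodicX L ψb) (hperσ : PeriodicX L ψσ) (hperσ2 : PeriodicX L ψσ2)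
    (heqs : IL01QG RS β W ψb ψσ ψσ2)
    (hbc : NoNormalFlow W ψb)
    (a : ℝ) (F : ℝ × ℝ → ℝ) (hF : ContDiff ℝ 1 F) :
    ∀ t₁ t₂ : ℝ,
      (∫ y in (0:ℝ)..W, ∫ x in (0:ℝ)..L,
        (a * xibar RS β ψb ψσ ψσ2 x y t₁ + F (ψσ x y t₁, ψσ2 x y t₁)))
      = ∫ y in (0:ℝ)..W, ∫ x in (0:ℝ)..L,
        (a * xibar RS β ψb ψσ ψσ2 x y t₂ + F (ψσ x y t₂, ψσ2 x y t₂)) := by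
  intro t₁ t₂
  have hρ : ContDiff ℝ 1 (uncurry3 (casimirIntegrand a F (xibar RS β ψb ψσ ψσ2) ψσ ψσ2)) :=
    contDiff_casimirIntegrand ((smooth3_xibar hψb hψσ hψσ2).contDiff 1) (hψσ.contDiff 1)
      (hψσ2.contDiff 1) hF
  have hderiv := fun t => hasDerivAt_integral_integral_pt hρ 0 L 0 W t
  exact is_const_of_deriv_eq_zero (fun t => (hderiv t).differentiableAt)
    (fun t => (hderiv t).deriv.trans <| integral_integral_pt_casimirIntegrand_eq_zero heqs hbc
      hW.le hψb hψσ hψσ2 hperb hperσ hperσ2 hF t) t₁ t₂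

/-- Conservation of the Casimirs `∫∫ (a ξ̄ + F(ψσ, ψσ²))` for any constant `a` and any
`C¹` function `F`, along smooth `x`-periodic solutions of the IL⁽⁰'¹⁾QG equations
satisfying the no-normal-flow boundary condition. -/
theorem casimir_conserved
    (L W β RS : ℝ) (hL : 0 < L) (hW : 0 < W) (hRS : 0 < RS)
    (ψb ψσ ψσ2 : ℝ → ℝ → ℝ → ℝ)
    (hψb : Smooth3 ψb) (hψσ : Smooth3 ψσ) (hψσ2 : Smooth3 ψσ2)
    (hperb : PeriodicX L ψb) (hperσ : PeriodicX L ψσ) (hperσ2 : PeriodicX L ψσ2)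
    (heqs : IL01QG RS β W ψb ψσ ψσ2)
    (hbc : NoNormalFlow W ψb)
    (a : ℝ) (F : ℝ × ℝ → ℝ) (hF : ContDiff ℝ 1 F) :
    ∀ t₁ t₂ : ℝ,
      (∫ y in (0:ℝ)..W, ∫ x in (0:ℝ)..L,
        (a * xibar RS β ψb ψσ ψσ2 x y t₁ + F (ψσ x y t₁, ψσ2 x y t₁)))
      = ∫ y in (0:ℝ)..W, ∫ x in (0:ℝ)..L,
        (a * xibar RS β ψb ψσ ψσ2 x y t₂ + F (ψσ x y t₂, ψσ2 x y t₂)) :=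
  casimir_conserved_general L W β RS hW ψb ψσ ψσ2 hψb hψσ hψσ2 hperb hperσ hperσ2 heqs hbc a F hF
end

section
/- Fix real parameters α, μ, b and S with s := 1 − S/3 > 0, set ν := 1 + α + sb − (2/3)μ and C := α(1 − (2/3)μ), and assume C > 0. Define the normalized growth rate g(κ) := κ √(max(4C(sκ²+1) − ν², 0)) / (2(sκ²+1)) for κ > 0 (the product of wavenumber and the imaginary part of the unstable root of p_κ). Then g(κ) < √(C/s) for every κ > 0, and sup_{κ>0} g(κ) = √(C/s); the supremum is not attained. -/
open Filter Topology

private lemma alg_aux (s C ν κ : ℝ) (hs : s ≠ 0) (hD : s * κ ^ 2 + 1 ≠ 0) :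
    (4 * C - ν ^ 2 * (s * κ ^ 2 + 1)⁻¹) * (1 - (s * κ ^ 2 + 1)⁻¹) / (4 * s)
    = (κ / (2 * (s * κ ^ 2 + 1))) ^ 2 * (4 * C * (s * κ ^ 2 + 1) - ν ^ 2) := by
  field_simp
  ring

private lemma sqrt_form_aux (κ D m : ℝ) (hκ : 0 ≤ κ) (hD : 0 < D) :
    κ * Real.sqrt m / (2 * D) = Real.sqrt ((κ / (2 * D)) ^ 2 * m) := by
  rw [Real.sqrt_mul (sq_nonneg _), Real.sqrt_sq (by positivity)]
  ring

/-- Saturation of the normalized growth rate: when `C = α(1 − (2/3)μ) > 0`, the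
growth rate `g(κ) = κ √(max(4C(sκ²+1) − ν², 0)) / (2(sκ²+1))` satisfies
`g(κ) < √(C/s)` for every `κ > 0`, and `√(C/s)` is the least upper bound of
`{g(κ) : κ > 0}`; the supremum is not attained. -/
theorem growth_rate_saturation
    (α μ b S s ν C : ℝ) (hs : 0 < s)
    (hsdef : s = 1 - S / 3)
    (hν : ν = 1 + α + s * b - 2 / 3 * μ)
    (hC : C = α * (1 - 2 / 3 * μ))
    (hCpos : 0 < C)
    (g : ℝ → ℝ)
    (hg : ∀ κ : ℝ, 0 < κ →
      g κ = κ * Real.sqrt (max (4 * C * (s * κ ^ 2 + 1) - ν ^ 2) 0)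
              / (2 * (s * κ ^ 2 + 1))) :
    (∀ κ : ℝ, 0 < κ → g κ < Real.sqrt (C / s))
    ∧ IsLUB {y : ℝ | ∃ κ : ℝ, 0 < κ ∧ g κ = y} (Real.sqrt (C / s))
    ∧ ¬ ∃ κ : ℝ, 0 < κ ∧ g κ = Real.sqrt (C / s) := by
  have hCs : 0 < C / s := div_pos hCpos hs
  have hD : ∀ κ : ℝ, 0 < s * κ ^ 2 + 1 := fun κ => by positivity
  -- Part 1: strict bound
  have part1 : ∀ κ : ℝ, 0 < κ → g κ < Real.sqrt (C / s) := by
    intro κ hκ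
    have hDκ := hD κ
    rw [hg κ hκ, sqrt_form_aux _ _ _ hκ.le hDκ]
    apply Real.sqrt_lt_sqrt (by positivity)
    have hmax : max (4 * C * (s * κ ^ 2 + 1) - ν ^ 2) 0 ≤ 4 * C * (s * κ ^ 2 + 1) := by
      apply max_le (by nlinarith [sq_nonneg ν]) (by positivity)
    calc (κ / (2 * (s * κ ^ 2 + 1))) ^ 2 * max (4 * C * (s * κ ^ 2 + 1) - ν ^ 2) 0
        ≤ (κ / (2 * (s * κ ^ 2 + 1))) ^ 2 * (4 * C * (s * κ ^ 2 + 1)) := by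
          apply mul_le_mul_of_nonneg_left hmax (sq_nonneg _)
      _ = C * κ ^ 2 / (s * κ ^ 2 + 1) := by field_simp; ring
      _ < C / s := by
          rw [div_lt_div_iff₀ hDκ hs]
          nlinarith [sq_nonneg κ]
  -- limit of g at infinity
  have hu : Tendsto (fun κ : ℝ => (s * κ ^ 2 + 1)⁻¹) atTop (𝓝 0) := by
    apply Tendsto.inv_tendsto_atTop
    apply tendsto_atTop_add_const_right
    exact (tendsto_pow_atTop two_ne_zero).const_mul_atTop hs
  set F : ℝ → ℝ := fun u => Real.sqrt ((4 * C - ν ^ 2 * u) * (1 - u) / (4 * s)) with hF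
  have hFcont : Continuous F := by
    apply Real.continuous_sqrt.comp
    fun_prop
  have hF0 : F 0 = Real.sqrt (C / s) := by
    simp only [hF]
    congr 1
    field_simp
    ring
  have key : Tendsto g atTop (𝓝 (Real.sqrt (C / s))) := by
    rw [← hF0]
    apply Tendsto.congr' _ ((hFcont.tendsto 0).comp hu)
    filter_upwards [eventually_ge_atTop (max 1 (ν ^ 2 / (4 * C * s)))] with κ hκ
    have hκ1 : (1 : ℝ) ≤ κ := le_trans (le_max_left _ _) hκ
    have hκ0 : 0 < κ := lt_of_lt_of_le one_pos hκ1
    have hκ2 : ν ^ 2 / (4 * C * s) ≤ κ := le_trans (le_max_right _ _) hκ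
    have hκsq : κ ≤ κ ^ 2 := by nlinarith
    have hM : 0 ≤ 4 * C * (s * κ ^ 2 + 1) - ν ^ 2 := by
      have h4cs : 0 < 4 * C * s := by positivity
      have := (div_le_iff₀ h4cs).mp hκ2
      nlinarith
    have hDκ := hD κ
    simp only [Function.comp]
    rw [hg κ hκ0, max_eq_left hM, sqrt_form_aux _ _ _ hκ0.le hDκ]
    simp only [hF]
    congr 1
    exact alg_aux s C ν κ hs.ne' hDκ.ne'
  -- Part 2: IsLUB
  have part2 : IsLUB {y : ℝ | ∃ κ : ℝ, 0 < κ ∧ g κ = y} (Real.sqrt (C / s)) := by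
    constructor
    · rintro y ⟨κ, hκ, rfl⟩
      exact (part1 κ hκ).le
    · intro w hw
      refine le_of_tendsto key ?_
      filter_upwards [eventually_gt_atTop (0 : ℝ)] with κ hκ
      exact hw ⟨κ, hκ, rfl⟩
  refine ⟨part1, part2, ?_⟩
  rintro ⟨κ, hκ, heq⟩
  exact absurd heq (ne_of_lt (part1 κ hκ))
end

section
/- Fix constants L > 0, W > 0, R_S > 0 and reals α < 0 and μ < 0. For continuously differentiable u and continuous p, q on the closed rectangle D := [0,L] × [0,W], define the second variation of the pseudoenergy–momentum δ²H := (1/2) ∫_D ( |∇u|² + R_S⁻² u² ) dx dy − (1/2) R_S⁻² α ∫_D ( p² − (2/3) μ⁻¹ q² ) dx dy. Then δ²H ≥ 0, and δ²H = 0 if and only if u = 0, p = 0 and q = 0 everywhere on D (formal stability of the baroclinic zonal jet with α < 0 and μ < 0). -/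
/-- Partial derivative in `x` of a field of `(x, y)`. -/
noncomputable def pdx (f : ℝ → ℝ → ℝ) (x y : ℝ) : ℝ := deriv (fun x' => f x' y) x

/-- Partial derivative in `y` of a field of `(x, y)`. -/
noncomputable def pdy (f : ℝ → ℝ → ℝ) (x y : ℝ) : ℝ := deriv (fun y' => f x y') y

/-!
With `c := -(1/2) R_S⁻² α > 0` and `m := (2/3) μ⁻¹ < 0`, `δ²H = (1/2) ∫∫ (|∇u|² + R_S⁻² u²) +
c ∫∫ (p² - m q²)` is a positive combination of integrals of nonnegative integrands, and each
integrand is continuous on the closed rectangle `D`. A continuous nonnegative function with zero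
integral over `D` vanishes on `D`; for the gradient term this needs `pdx`, `pdy` to be replaced by
the derivative within `D`, which is continuous up to the boundary and agrees with them inside.
-/

open Set Function Topology intervalIntegral

lemma ContinuousOn.exists_continuous_extend_Icc_prod {α β E : Type*} [LinearOrder α]
    [TopologicalSpace α] [OrderTopology α] [LinearOrder β] [TopologicalSpace β] [OrderTopology β]
    [TopologicalSpace E] {a b : α} {c d : β} (hab : a ≤ b) (hcd : c ≤ d) {f : α → β → E}
    (hf : ContinuousOn (uncurry f) (Icc a b ×ˢ Icc c d)) :
    ∃ g : α → β → E, Continuous (uncurry g) ∧ ∀ x ∈ Icc a b, ∀ y ∈ Icc c d, g x y = f x y := by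
  let π : α × β → α × β := fun z => (projIcc a b hab z.1, projIcc c d hcd z.2)
  refine ⟨fun x y => uncurry f (π (x, y)), hf.comp_continuous (f := π) (by fun_prop)
    fun z => ⟨(projIcc a b hab z.1).2, (projIcc c d hcd z.2).2⟩, fun x hx y hy => ?_⟩
  simp only [π, uncurry_apply_pair, projIcc_of_mem hab hx, projIcc_of_mem hcd hy]

lemma HasFDerivAt.pdx_eq {u : ℝ → ℝ → ℝ} {u' : ℝ × ℝ →L[ℝ] ℝ} {x y : ℝ}
    (h : HasFDerivAt (uncurry u) u' (x, y)) : pdx u x y = u' (1, 0) := by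
  have := h.comp_hasDerivAt x ((hasDerivAt_id' x).prodMk (hasDerivAt_const x y))
  exact this.deriv

lemma HasFDerivAt.pdy_eq {u : ℝ → ℝ → ℝ} {u' : ℝ × ℝ →L[ℝ] ℝ} {x y : ℝ}
    (h : HasFDerivAt (uncurry u) u' (x, y)) : pdy u x y = u' (0, 1) := by
  have := h.comp_hasDerivAt y ((hasDerivAt_const y x).prodMk (hasDerivAt_id' y))
  exact this.deriv

section Rectangle

variable {a b c d : ℝ}

lemma integral_integral_congr_Ioo {E : Type*} [NormedAddCommGroup E] [NormedSpace ℝ E]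
    (hab : a ≤ b) (hcd : c ≤ d) {f g : ℝ → ℝ → E}
    (h : ∀ x ∈ Ioo a b, ∀ y ∈ Ioo c d, f x y = g x y) :
    ∫ x in a..b, ∫ y in c..d, f x y = ∫ x in a..b, ∫ y in c..d, g x y :=
  integral_congr_Ioo_of_le hab fun x hx => integral_congr_Ioo_of_le hcd fun y hy => h x hx y hy

lemma integral_eq_zero_iff_of_continuousOn_of_nonneg (hab : a < b) {f : ℝ → ℝ}
    (hf : ContinuousOn f (Icc a b)) (hf0 : ∀ x ∈ Icc a b, 0 ≤ f x) :
    ∫ x in a..b, f x = 0 ↔ ∀ x ∈ Icc a b, f x = 0 := by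
  refine ⟨fun h => ?_, fun h => ?_⟩
  · by_contra! ⟨x, hx, hfx⟩
    exact (integral_pos hab hf (fun y hy => hf0 y (Ioc_subset_Icc_self hy))
      ⟨x, hx, (hf0 x hx).lt_of_ne' hfx⟩).ne' h
  · rw [integral_congr (g := fun _ => (0 : ℝ)) (by rwa [uIcc_of_le hab.le]),
      intervalIntegral.integral_zero]

lemma integral_integral_eq_zero_iff_of_continuousOn_of_nonneg (hab : a < b) (hcd : c < d)
    {f : ℝ → ℝ → ℝ} (hf : ContinuousOn (uncurry f) (Icc a b ×ˢ Icc c d))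
    (hf0 : ∀ x ∈ Icc a b, ∀ y ∈ Icc c d, 0 ≤ f x y) :
    ∫ x in a..b, ∫ y in c..d, f x y = 0 ↔ ∀ x ∈ Icc a b, ∀ y ∈ Icc c d, f x y = 0 := by
  obtain ⟨g, hg, hgf⟩ := hf.exists_continuous_extend_Icc_prod hab.le hcd.le
  rw [← integral_integral_congr_Ioo hab.le hcd.le fun x hx y hy =>
    hgf x (Ioo_subset_Icc_self hx) y (Ioo_subset_Icc_self hy)]
  have hg0 : ∀ x ∈ Icc a b, ∀ y ∈ Icc c d, 0 ≤ g x y := fun x hx y hy =>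
    (hgf x hx y hy).symm ▸ hf0 x hx y hy
  have hinner (x : ℝ) (hx : x ∈ Icc a b) :
      ∫ y in c..d, g x y = 0 ↔ ∀ y ∈ Icc c d, g x y = 0 :=
    integral_eq_zero_iff_of_continuousOn_of_nonneg hcd
      (hg.comp (Continuous.prodMk_right x)).continuousOn (hg0 x hx)
  rw [integral_eq_zero_iff_of_continuousOn_of_nonneg hab
    (continuous_parametric_intervalIntegral_of_continuous' hg c d).continuousOn
    fun x hx => integral_nonneg hcd.le fun y hy => hg0 x hx y hy]
  refine ⟨fun h x hx y hy => ?_, fun h x hx => (hinner x hx).2 fun y hy => ?_⟩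
  · rw [← hgf x hx y hy]
    exact (hinner x hx).1 (h x hx) y hy
  · rw [hgf x hx y hy]
    exact h x hx y hy

lemma integral_integral_gradient_sq_add_mul_sq_nonneg_and_eq_zero_iff {k : ℝ} (hab : a < b)
    (hcd : c < d) (hk : 0 < k) {u : ℝ → ℝ → ℝ}
    (hu : ContDiffOn ℝ 1 (uncurry u) (Icc a b ×ˢ Icc c d)) :
    0 ≤ ∫ x in a..b, ∫ y in c..d, (pdx u x y ^ 2 + pdy u x y ^ 2 + k * u x y ^ 2) ∧
      (∫ x in a..b, ∫ y in c..d, (pdx u x y ^ 2 + pdy u x y ^ 2 + k * u x y ^ 2) = 0 ↔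
        ∀ x ∈ Icc a b, ∀ y ∈ Icc c d, u x y = 0) := by
  set S := Icc a b ×ˢ Icc c d
  set Du := fderivWithin ℝ (uncurry u) S
  set K : ℝ → ℝ → ℝ := fun x y => Du (x, y) (1, 0) ^ 2 + Du (x, y) (0, 1) ^ 2 + k * u x y ^ 2
  have hK : ContinuousOn (uncurry K) S := by
    have hDu : ContinuousOn Du S :=
      hu.continuousOn_fderivWithin ((uniqueDiffOn_Icc hab).prod (uniqueDiffOn_Icc hcd)) le_rfl
    exact (((hDu.clm_apply continuousOn_const).pow 2).add ((hDu.clm_apply continuousOn_const).pow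
      2)).add (continuousOn_const.mul (hu.continuousOn.pow 2))
  have hK0 : ∀ x ∈ Icc a b, ∀ y ∈ Icc c d, 0 ≤ K x y := fun x _ y _ => by positivity
  have hinterior : ∀ x ∈ Ioo a b, ∀ y ∈ Ioo c d,
      pdx u x y ^ 2 + pdy u x y ^ 2 + k * u x y ^ 2 = K x y := by
    intro x hx y hy
    have hS : S ∈ 𝓝 (x, y) := prod_mem_nhds (Icc_mem_nhds hx.1 hx.2) (Icc_mem_nhds hy.1 hy.2)
    have hDu : HasFDerivAt (uncurry u) (Du (x, y)) (x, y) :=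
      (hu.differentiableOn one_ne_zero _ (mem_of_mem_nhds hS)).hasFDerivWithinAt.hasFDerivAt hS
    rw [hDu.pdx_eq, hDu.pdy_eq]
  have hK_eq_zero : (∀ x ∈ Icc a b, ∀ y ∈ Icc c d, K x y = 0) ↔
      ∀ x ∈ Icc a b, ∀ y ∈ Icc c d, u x y = 0 := by
    refine ⟨fun h x hx y hy => ?_, fun h x hx y hy => ?_⟩
    · have hku : k * u x y ^ 2 = 0 :=
        ((add_eq_zero_iff_of_nonneg (by positivity) (by positivity)).1 (h x hx y hy)).2
      simpa [hk.ne'] using hku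
    · have hu0 : EqOn (uncurry u) (fun _ => 0) S := fun z hz => h z.1 hz.1 z.2 hz.2
      have hDu0 : Du (x, y) = 0 := by
        simp only [Du]
        rw [fderivWithin_congr hu0 (hu0 ⟨hx, hy⟩), fderivWithin_const_apply]
      simp [K, hDu0, h x hx y hy]
  rw [integral_integral_congr_Ioo hab.le hcd.le hinterior,
    integral_integral_eq_zero_iff_of_continuousOn_of_nonneg hab hcd hK hK0, hK_eq_zero]
  exact ⟨integral_nonneg hab.le fun x hx => integral_nonneg hcd.le fun y hy => hK0 x hx y hy,
    Iff.rfl⟩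

lemma integral_integral_sq_sub_mul_sq_nonneg_and_eq_zero_iff {k : ℝ} (hab : a < b)
    (hcd : c < d) (hk : k < 0) {p q : ℝ → ℝ → ℝ}
    (hp : ContinuousOn (uncurry p) (Icc a b ×ˢ Icc c d))
    (hq : ContinuousOn (uncurry q) (Icc a b ×ˢ Icc c d)) :
    0 ≤ ∫ x in a..b, ∫ y in c..d, (p x y ^ 2 - k * q x y ^ 2) ∧
      (∫ x in a..b, ∫ y in c..d, (p x y ^ 2 - k * q x y ^ 2) = 0 ↔
        ∀ x ∈ Icc a b, ∀ y ∈ Icc c d, p x y = 0 ∧ q x y = 0) := by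
  have hsplit (s t : ℝ) : s ^ 2 - k * t ^ 2 = s ^ 2 + -k * t ^ 2 := by ring
  have hkq (t : ℝ) : 0 ≤ -k * t ^ 2 := mul_nonneg (neg_nonneg.2 hk.le) (sq_nonneg t)
  have h0 : ∀ x ∈ Icc a b, ∀ y ∈ Icc c d, 0 ≤ p x y ^ 2 - k * q x y ^ 2 := fun x _ y _ => by
    rw [hsplit]
    exact add_nonneg (sq_nonneg _) (hkq _)
  rw [integral_integral_eq_zero_iff_of_continuousOn_of_nonneg
    (f := fun x y => p x y ^ 2 - k * q x y ^ 2) hab hcd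
    (by exact (hp.pow 2).sub (continuousOn_const.mul (hq.pow 2))) h0]
  refine ⟨integral_nonneg hab.le fun x hx => integral_nonneg hcd.le fun y hy => h0 x hx y hy,
    forall₂_congr fun x _ => forall₂_congr fun y _ => ?_⟩
  rw [hsplit, add_eq_zero_iff_of_nonneg (sq_nonneg _) (hkq _),
    mul_eq_zero_iff_left (neg_ne_zero.2 hk.ne), pow_eq_zero_iff two_ne_zero,
    pow_eq_zero_iff two_ne_zero]

end Rectangle

/-- Formal stability of the baroclinic zonal jet with `α < 0` and `μ < 0`: the
second variation of the pseudoenergy–momentum,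
`δ²H = (1/2)∫∫(|∇u|² + R_S⁻²u²) − (1/2)R_S⁻²α∫∫(p² − (2/3)μ⁻¹q²)`,
is nonnegative, and vanishes iff `u = p = q = 0` on `D = [0,L]×[0,W]`. -/
theorem formal_stability_second_variation
    (L W RS α μ : ℝ) (hL : 0 < L) (hW : 0 < W) (hRS : 0 < RS)
    (hα : α < 0) (hμ : μ < 0)
    (u p q : ℝ → ℝ → ℝ)
    (hu : ContDiffOn ℝ 1 (fun z : ℝ × ℝ => u z.1 z.2) (Set.Icc 0 L ×ˢ Set.Icc 0 W))
    (hp : ContinuousOn (fun z : ℝ × ℝ => p z.1 z.2) (Set.Icc 0 L ×ˢ Set.Icc 0 W))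
    (hq : ContinuousOn (fun z : ℝ × ℝ => q z.1 z.2) (Set.Icc 0 L ×ˢ Set.Icc 0 W))
    (d2H : ℝ)
    (hd2H : d2H = 1 / 2 * (∫ x in (0:ℝ)..L, ∫ y in (0:ℝ)..W,
        ((pdx u x y) ^ 2 + (pdy u x y) ^ 2 + (RS ^ 2)⁻¹ * (u x y) ^ 2))
      - 1 / 2 * (RS ^ 2)⁻¹ * α * ∫ x in (0:ℝ)..L, ∫ y in (0:ℝ)..W,
        ((p x y) ^ 2 - 2 / 3 * μ⁻¹ * (q x y) ^ 2)) :
    0 ≤ d2H ∧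
      (d2H = 0 ↔ ∀ x ∈ Set.Icc (0:ℝ) L, ∀ y ∈ Set.Icc (0:ℝ) W,
        u x y = 0 ∧ p x y = 0 ∧ q x y = 0) := by
  obtain ⟨hX0, hX⟩ := integral_integral_gradient_sq_add_mul_sq_nonneg_and_eq_zero_iff
    (k := (RS ^ 2)⁻¹) hL hW (by positivity) hu
  obtain ⟨hY0, hY⟩ := integral_integral_sq_sub_mul_sq_nonneg_and_eq_zero_iff
    (k := 2 / 3 * μ⁻¹) hL hW (mul_neg_of_pos_of_neg (by norm_num) (inv_lt_zero.mpr hμ)) hp hq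
  have hc : 0 < -(1 / 2 * (RS ^ 2)⁻¹ * α) := neg_pos.2 (mul_neg_of_pos_of_neg (by positivity) hα)
  have hX0' := mul_nonneg (show (0 : ℝ) ≤ 1 / 2 by norm_num) hX0
  have hY0' := mul_nonneg hc.le hY0
  rw [hd2H, sub_eq_add_neg, neg_mul_eq_neg_mul]
  refine ⟨add_nonneg hX0' hY0', ?_⟩
  rw [add_eq_zero_iff_of_nonneg hX0' hY0', mul_eq_zero_iff_left (by norm_num),
    mul_eq_zero_iff_left hc.ne', hX, hY]
  simp only [← forall₂_and]
end

section
/- Fix constants L > 0, W > 0, R_S > 0 and reals α, μ, η₁, λ₁ with α < 0, −1 ≤ μ < 0, 0 < η₁ < −α, and −α − η₁ ≤ λ₁ ≤ −α + η₁. For continuously differentiable u and continuous p, q on D := [0,L] × [0,W], define ΔH := (1/2) ∫_D ( |∇u|² + R_S⁻² u² ) dx dy − (1/2) R_S⁻² α ∫_D ( p² − (2/3) μ⁻¹ q² ) dx dy, and the squared norm ‖(u,p,q)‖²(λ₁) := (1/2) ∫_D ( |∇u|² + R_S⁻² u² ) dx dy + (1/2) R_S⁻² λ₁ ∫_D ( p²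 + (2/3) q² ) dx dy. Then ΔH ≥ ((−α − η₁)/λ₁) · ‖(u,p,q)‖²(λ₁) (lower convexity estimate establishing Lyapunov stability for basic states with α < 0 and 0 > μ ≥ −1). -/
open Set intervalIntegral MeasureTheory

theorem continuousOn_parametric_intervalIntegral_of_continuousOn
    {E : Type*} [NormedAddCommGroup E] [NormedSpace ℝ E]
    {f : ℝ → ℝ → E} {a b c d : ℝ} (hab : a ≤ b) (hcd : c ≤ d)
    (hf : ContinuousOn (fun z : ℝ × ℝ => f z.1 z.2) (Icc a b ×ˢ Icc c d)) :
    ContinuousOn (fun x => ∫ y in c..d, f x y) (Icc a b) := by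
  -- clamping both variables into the rectangle gives a globally continuous integrand
  let F : ℝ → ℝ → E := fun x y => f (projIcc a b hab x) (projIcc c d hcd y)
  have hF : Continuous (Function.uncurry F) :=
    hf.comp_continuous
      (f := fun z : ℝ × ℝ => ((projIcc a b hab z.1 : ℝ), (projIcc c d hcd z.2 : ℝ))) (by fun_prop)
      fun z => ⟨(projIcc a b hab z.1).2, (projIcc c d hcd z.2).2⟩
  refine (continuous_parametric_intervalIntegral_of_continuous' hF c d).continuousOn.congr
    fun x hx => integral_congr fun y hy => ?_
  rw [uIcc_of_le hcd] at hy
  simp [F, projIcc_of_mem _ hx, projIcc_of_mem _ hy]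

theorem integral_integral_mono_on {f g : ℝ → ℝ → ℝ} {a b c d : ℝ} (hab : a ≤ b) (hcd : c ≤ d)
    (hf : ContinuousOn (fun z : ℝ × ℝ => f z.1 z.2) (Icc a b ×ˢ Icc c d))
    (hg : ContinuousOn (fun z : ℝ × ℝ => g z.1 z.2) (Icc a b ×ˢ Icc c d))
    (h : ∀ x ∈ Icc a b, ∀ y ∈ Icc c d, f x y ≤ g x y) :
    ∫ x in a..b, ∫ y in c..d, f x y ≤ ∫ x in a..b, ∫ y in c..d, g x y := by
  have slice {φ : ℝ → ℝ → ℝ}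
      (hφ : ContinuousOn (fun z : ℝ × ℝ => φ z.1 z.2) (Icc a b ×ˢ Icc c d)) {x : ℝ}
      (hx : x ∈ Icc a b) : IntervalIntegrable (φ x) volume c d :=
    (hφ.comp (Continuous.prodMk_right x).continuousOn fun _ hy => ⟨hx, hy⟩)
      |>.intervalIntegrable_of_Icc hcd
  refine integral_mono_on hab ?_ ?_
    fun x hx => integral_mono_on hcd (slice hf hx) (slice hg hx) (h x hx)
  · exact (continuousOn_parametric_intervalIntegral_of_continuousOn hab hcd hf)
      |>.intervalIntegrable_of_Icc hab
  · exact (continuousOn_parametric_intervalIntegral_of_continuousOn hab hcd hg)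
      |>.intervalIntegrable_of_Icc hab

theorem integral_integral_nonneg {f : ℝ → ℝ → ℝ} {a b c d : ℝ} (hab : a ≤ b) (hcd : c ≤ d)
    (h : ∀ x ∈ Icc a b, ∀ y ∈ Icc c d, 0 ≤ f x y) :
    0 ≤ ∫ x in a..b, ∫ y in c..d, f x y :=
  integral_nonneg hab fun x hx => integral_nonneg hcd (h x hx)

theorem div_mul_norm_le_pseudoenergy {E J₁ J₂ k α η lam : ℝ} (hE : 0 ≤ E) (hk : 0 ≤ k)
    (hJ₂ : 0 ≤ J₂) (hJ : J₂ ≤ J₁) (hη : 0 < η) (hη' : η < -α) (hlam : -α - η ≤ lam) :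
    (-α - η) / lam * (1 / 2 * E + 1 / 2 * k * lam * J₂) ≤ 1 / 2 * E - 1 / 2 * k * α * J₁ := by
  have hlam0 : 0 < lam := by linarith
  set c := (-α - η) / lam
  have hcl : c * lam = -α - η := div_mul_cancel₀ _ hlam0.ne'
  have hE' : c * (1 / 2 * E) ≤ 1 / 2 * E :=
    mul_le_of_le_one_left (by positivity) ((div_le_one hlam0).2 hlam)
  have hJ' : (-α - η) * J₂ ≤ -α * J₁ := by nlinarith
  calc c * (1 / 2 * E + 1 / 2 * k * lam * J₂)
      = c * (1 / 2 * E) + 1 / 2 * k * (c * lam * J₂) := by ring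
    _ ≤ 1 / 2 * E + 1 / 2 * k * (-α * J₁) := by rw [hcl]; gcongr
    _ = 1 / 2 * E - 1 / 2 * k * α * J₁ := by ring

theorem lyapunov_convexity_estimate_one_general
    (L W RS α μ η₁ lam₁ : ℝ) (hL : 0 < L) (hW : 0 < W)
    (hμ1 : -1 ≤ μ) (hμ0 : μ < 0)
    (hη : 0 < η₁) (hη' : η₁ < -α)
    (hlamlo : -α - η₁ ≤ lam₁)
    (u p q : ℝ → ℝ → ℝ)
    (hp : ContinuousOn (fun z : ℝ × ℝ => p z.1 z.2) (Set.Icc 0 L ×ˢ Set.Icc 0 W))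
    (hq : ContinuousOn (fun z : ℝ × ℝ => q z.1 z.2) (Set.Icc 0 L ×ˢ Set.Icc 0 W))
    (ΔH nrmSq : ℝ)
    (hΔH : ΔH = 1 / 2 * (∫ x in (0:ℝ)..L, ∫ y in (0:ℝ)..W,
        ((pdx u x y) ^ 2 + (pdy u x y) ^ 2 + (RS ^ 2)⁻¹ * (u x y) ^ 2))
      - 1 / 2 * (RS ^ 2)⁻¹ * α * ∫ x in (0:ℝ)..L, ∫ y in (0:ℝ)..W,
        ((p x y) ^ 2 - 2 / 3 * μ⁻¹ * (q x y) ^ 2))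
    (hnrm : nrmSq = 1 / 2 * (∫ x in (0:ℝ)..L, ∫ y in (0:ℝ)..W,
        ((pdx u x y) ^ 2 + (pdy u x y) ^ 2 + (RS ^ 2)⁻¹ * (u x y) ^ 2))
      + 1 / 2 * (RS ^ 2)⁻¹ * lam₁ * ∫ x in (0:ℝ)..L, ∫ y in (0:ℝ)..W,
        ((p x y) ^ 2 + 2 / 3 * (q x y) ^ 2)) :
    (-α - η₁) / lam₁ * nrmSq ≤ ΔH := by
  have hμinv : μ⁻¹ ≤ -1 := (inv_le_of_neg hμ0 (by norm_num)).2 (by simpa using hμ1)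
  have hJ : ∫ x in (0:ℝ)..L, ∫ y in (0:ℝ)..W, (p x y ^ 2 + 2 / 3 * q x y ^ 2)
      ≤ ∫ x in (0:ℝ)..L, ∫ y in (0:ℝ)..W, (p x y ^ 2 - 2 / 3 * μ⁻¹ * q x y ^ 2) :=
    integral_integral_mono_on hL.le hW.le (by fun_prop) (by fun_prop)
      fun x _ y _ => by nlinarith [sq_nonneg (q x y)]
  rw [hΔH, hnrm]
  exact div_mul_norm_le_pseudoenergy
    (integral_integral_nonneg hL.le hW.le fun x _ y _ => by positivity) (by positivity)
    (integral_integral_nonneg hL.le hW.le fun x _ y _ => by positivity) hJ hη hη' hlamlo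

/-- Lower convexity estimate for the pseudoenergy–momentum establishing Lyapunov
stability of the baroclinic zonal jet with `α < 0` and `0 > μ ≥ −1`: for
`0 < η₁ < −α` and `−α − η₁ ≤ lam₁ ≤ −α + η₁`,
`ΔH ≥ ((−α − η₁)/lam₁) · ‖(u,p,q)‖²(lam₁)`. -/
theorem lyapunov_convexity_estimate_one
    (L W RS α μ η₁ lam₁ : ℝ) (hL : 0 < L) (hW : 0 < W) (hRS : 0 < RS)
    (hα : α < 0) (hμ1 : -1 ≤ μ) (hμ0 : μ < 0)
    (hη : 0 < η₁) (hη' : η₁ < -α)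
    (hlamlo : -α - η₁ ≤ lam₁) (hlamhi : lam₁ ≤ -α + η₁)
    (u p q : ℝ → ℝ → ℝ)
    (hu : ContDiffOn ℝ 1 (fun z : ℝ × ℝ => u z.1 z.2) (Set.Icc 0 L ×ˢ Set.Icc 0 W))
    (hp : ContinuousOn (fun z : ℝ × ℝ => p z.1 z.2) (Set.Icc 0 L ×ˢ Set.Icc 0 W))
    (hq : ContinuousOn (fun z : ℝ × ℝ => q z.1 z.2) (Set.Icc 0 L ×ˢ Set.Icc 0 W))
    (ΔH nrmSq : ℝ)
    (hΔH : ΔH = 1 / 2 * (∫ x in (0:ℝ)..L, ∫ y in (0:ℝ)..W,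
        ((pdx u x y) ^ 2 + (pdy u x y) ^ 2 + (RS ^ 2)⁻¹ * (u x y) ^ 2))
      - 1 / 2 * (RS ^ 2)⁻¹ * α * ∫ x in (0:ℝ)..L, ∫ y in (0:ℝ)..W,
        ((p x y) ^ 2 - 2 / 3 * μ⁻¹ * (q x y) ^ 2))
    (hnrm : nrmSq = 1 / 2 * (∫ x in (0:ℝ)..L, ∫ y in (0:ℝ)..W,
        ((pdx u x y) ^ 2 + (pdy u x y) ^ 2 + (RS ^ 2)⁻¹ * (u x y) ^ 2))
      + 1 / 2 * (RS ^ 2)⁻¹ * lam₁ * ∫ x in (0:ℝ)..L, ∫ y in (0:ℝ)..W,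
        ((p x y) ^ 2 + 2 / 3 * (q x y) ^ 2)) :
    (-α - η₁) / lam₁ * nrmSq ≤ ΔH :=
  lyapunov_convexity_estimate_one_general L W RS α μ η₁ lam₁ hL hW hμ1 hμ0 hη hη' hlamlo u p q hp hq
    ΔH nrmSq hΔH hnrm
end
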